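/- Let {Y_n} be a supermartingale and T a stopping time such that the family of negative parts {Y_{min(T,n)}^-}_{n∈ℕ} is uniformly integrable. Then Y_T := lim_n Y_{min(T,n)} exists almost surely, is integrable, and E[Y_T] ≤ E[Y_0]. -/

import Mathlib

open MeasureTheory Filter Topology
open scoped ENNReal NNReal

/-!
Stopping preserves the supermartingale property, so `E[Y_{T∧n}] ≤ E[Y_0]`. Since
`|x| = x + 2x⁻` and the negative parts are bounded in `L¹`, the stopped process is `L¹`-bounded
and converges a.s. by Doob's convergence theorem. For the limit `Y_T`, Fatou's lemma bounds
`E[Y_T⁺] ≤ liminf E[Y_{T∧n}⁺] = liminf (E[Y_{T∧n}] + E[Y_{T∧n}⁻])`, and uniform integrability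
(Vitali) turns `E[Y_{T∧n}⁻]` into `E[Y_T⁻]` in the limit, whence `E[Y_T] ≤ E[Y_0]`.
-/

/-- The process `Y` stopped at the (possibly infinite) stopping time `T`. -/
noncomputable def stoppedAt {Ω : Type*} (Y : ℕ → Ω → ℝ) (T : Ω → ℕ∞) (n : ℕ) (ω : Ω) : ℝ :=
  Y (min (T ω) (n : ℕ∞)).toNat ω

/-- `T : Ω → ℕ ∪ {∞}` is a stopping time w.r.t. the filtration `f`. -/
def IsStoppingTimeENat {Ω : Type*} {m : MeasurableSpace Ω} (f : Filtration ℕ m)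
    (T : Ω → ℕ∞) : Prop :=
  ∀ n : ℕ, MeasurableSet[f n] {ω | T ω ≤ (n : ℕ∞)}

namespace MeasureTheory

variable {Ω : Type*} {m : MeasurableSpace Ω} {μ : Measure Ω}

theorem integral_le_of_tendsto_ae_of_nonneg {f : ℕ → Ω → ℝ} {g : Ω → ℝ} {a : ℕ → ℝ} {A : ℝ}
    (hf : ∀ n, Integrable (f n) μ) (hf_nonneg : ∀ n, 0 ≤ᵐ[μ] f n)
    (hfg : ∀ᵐ ω ∂μ, Tendsto (fun n => f n ω) atTop (𝓝 (g ω)))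
    (hfa : ∀ n, ∫ ω, f n ω ∂μ ≤ a n) (ha : Tendsto a atTop (𝓝 A)) :
    ∫ ω, g ω ∂μ ≤ A := by
  have hA : 0 ≤ A :=
    ge_of_tendsto' ha fun n => (integral_nonneg_of_ae (hf_nonneg n)).trans (hfa n)
  have hg_nonneg : 0 ≤ᵐ[μ] g := by
    filter_upwards [hfg, ae_all_iff.2 hf_nonneg] with ω hω hω0
    exact ge_of_tendsto' hω hω0
  have hg_meas : AEStronglyMeasurable g μ :=
    aestronglyMeasurable_of_tendsto_ae atTop (fun n => (hf n).aestronglyMeasurable) hfg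
  rw [integral_eq_lintegral_of_nonneg_ae hg_nonneg hg_meas]
  refine ENNReal.toReal_le_of_le_ofReal hA ?_
  calc ∫⁻ ω, ENNReal.ofReal (g ω) ∂μ
      = ∫⁻ ω, liminf (fun n => ENNReal.ofReal (f n ω)) atTop ∂μ := by
        refine lintegral_congr_ae ?_
        filter_upwards [hfg] with ω hω
        exact ((ENNReal.continuous_ofReal.tendsto _).comp hω).liminf_eq.symm
    _ ≤ liminf (fun n => ∫⁻ ω, ENNReal.ofReal (f n ω) ∂μ) atTop :=
        lintegral_liminf_le' fun n => (hf n).aemeasurable.ennreal_ofReal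
    _ = liminf (fun n => ENNReal.ofReal (∫ ω, f n ω ∂μ)) atTop := by
        congr with n
        exact (ofReal_integral_eq_lintegral_ofReal (hf n) (hf_nonneg n)).symm
    _ ≤ liminf (fun n => ENNReal.ofReal (a n)) atTop :=
        liminf_le_liminf (Eventually.of_forall fun n => ENNReal.ofReal_le_ofReal (hfa n))
    _ = ENNReal.ofReal A := ((ENNReal.continuous_ofReal.tendsto _).comp ha).liminf_eq

theorem tendsto_integral_of_tendsto_ae_of_unifIntegrable [IsFiniteMeasure μ]
    {f : ℕ → Ω → ℝ} {g : Ω → ℝ} (hf : ∀ n, Integrable (f n) μ) (hg : Integrable g μ)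
    (hui : UnifIntegrable f 1 μ) (hfg : ∀ᵐ ω ∂μ, Tendsto (fun n => f n ω) atTop (𝓝 (g ω))) :
    Tendsto (fun n => ∫ ω, f n ω ∂μ) atTop (𝓝 (∫ ω, g ω ∂μ)) := by
  refine tendsto_integral_of_L1 g hg.aestronglyMeasurable (Eventually.of_forall hf) ?_
  simpa only [eLpNorm_one_eq_lintegral_enorm, Pi.sub_apply] using
    tendsto_Lp_finite_of_tendsto_ae le_rfl ENNReal.one_ne_top
      (fun n => (hf n).aestronglyMeasurable) (memLp_one_iff_integrable.2 hg) hui hfg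

theorem Integrable.posPart {f : Ω → ℝ} (hf : Integrable f μ) : Integrable f⁺ μ := hf.pos_part

theorem Integrable.negPart {f : Ω → ℝ} (hf : Integrable f μ) : Integrable f⁻ μ := hf.neg_part

theorem integral_posPart_sub_integral_negPart {f : Ω → ℝ} (hf : Integrable f μ) :
    ∫ ω, f⁺ ω ∂μ - ∫ ω, f⁻ ω ∂μ = ∫ ω, f ω ∂μ := by
  rw [← integral_sub hf.posPart hf.negPart]
  simp only [Pi.posPart_apply, Pi.negPart_apply, posPart_sub_negPart]

theorem integral_le_of_tendsto_ae_of_unifIntegrable_negPart [IsFiniteMeasure μ]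
    {f : ℕ → Ω → ℝ} {g : Ω → ℝ} {K : ℝ} (hf : ∀ n, Integrable (f n) μ) (hg : Integrable g μ)
    (hui : UnifIntegrable (fun n => (f n)⁻) 1 μ)
    (hfg : ∀ᵐ ω ∂μ, Tendsto (fun n => f n ω) atTop (𝓝 (g ω)))
    (hK : ∀ n, ∫ ω, f n ω ∂μ ≤ K) :
    ∫ ω, g ω ∂μ ≤ K := by
  have hneg : Tendsto (fun n => ∫ ω, (f n)⁻ ω ∂μ) atTop (𝓝 (∫ ω, g⁻ ω ∂μ)) := by
    refine tendsto_integral_of_tendsto_ae_of_unifIntegrable (fun n => (hf n).negPart)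
      hg.negPart hui ?_
    filter_upwards [hfg] with ω hω
    exact hω.neg.max tendsto_const_nhds
  have hpos : ∫ ω, g⁺ ω ∂μ ≤ K + ∫ ω, g⁻ ω ∂μ := by
    refine integral_le_of_tendsto_ae_of_nonneg (fun n => (hf n).posPart)
      (fun n => ae_of_all _ fun ω => posPart_nonneg (f n ω)) ?_ (fun n => ?_)
      (tendsto_const_nhds.add hneg)
    · filter_upwards [hfg] with ω hω
      exact hω.max tendsto_const_nhds
    · linarith [hK n, integral_posPart_sub_integral_negPart (hf n)]
  linarith [integral_posPart_sub_integral_negPart hg]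

namespace Supermartingale

variable {ℱ : Filtration ℕ m} {f : ℕ → Ω → ℝ}

protected theorem stoppedProcess [SigmaFiniteFiltration μ ℱ] (hf : Supermartingale f ℱ μ)
    {τ : Ω → WithTop ℕ} (hτ : IsStoppingTime ℱ τ) : Supermartingale (stoppedProcess f τ) ℱ μ := by
  simpa only [stoppedProcess_neg, neg_neg] using (hf.neg.stoppedProcess hτ).neg

theorem integral_le [SigmaFiniteFiltration μ ℱ] (hf : Supermartingale f ℱ μ) {i j : ℕ}
    (hij : i ≤ j) : ∫ ω, f j ω ∂μ ≤ ∫ ω, f i ω ∂μ := by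
  simpa only [setIntegral_univ] using hf.setIntegral_le hij MeasurableSet.univ

theorem eLpNorm_one_le_of_eLpNorm_negPart_le [SigmaFiniteFiltration μ ℱ]
    (hf : Supermartingale f ℱ μ) {C : ℝ≥0} (hC : ∀ n, eLpNorm (f n)⁻ 1 μ ≤ C) (n : ℕ) :
    eLpNorm (f n) 1 μ ≤ ENNReal.ofReal (∫ ω, f 0 ω ∂μ + 2 * C) := by
  have hfn := hf.integrable n
  have hneg : ∫ ω, (f n)⁻ ω ∂μ ≤ C := by
    have h := ENNReal.toReal_mono ENNReal.coe_ne_top (hC n)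
    rw [toReal_eLpNorm hfn.negPart.aestronglyMeasurable,
      lpNorm_one_eq_integral_norm hfn.negPart.aestronglyMeasurable, ENNReal.coe_toReal] at h
    simpa only [Pi.negPart_apply, Real.norm_of_nonneg (negPart_nonneg _)] using h
  have habs : ∫ ω, ‖f n ω‖ ∂μ = ∫ ω, f n ω ∂μ + 2 * ∫ ω, (f n)⁻ ω ∂μ := by
    rw [← integral_const_mul, ← integral_add hfn (hfn.negPart.const_mul 2)]
    congr with ω
    rw [Real.norm_eq_abs, Pi.negPart_apply, ← posPart_add_negPart]
    linarith [posPart_sub_negPart (f n ω)]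
  rw [← ofReal_lpNorm (memLp_one_iff_integrable.2 hfn),
    lpNorm_one_eq_integral_norm hfn.aestronglyMeasurable, habs]
  exact ENNReal.ofReal_le_ofReal (by linarith [hf.integral_le (Nat.zero_le n)])

theorem exists_integrable_ae_tendsto_of_bdd [IsFiniteMeasure μ] (hf : Supermartingale f ℱ μ)
    {R : ℝ≥0} (hbdd : ∀ n, eLpNorm (f n) 1 μ ≤ R) :
    ∃ g : Ω → ℝ, Integrable g μ ∧ ∀ᵐ ω ∂μ, Tendsto (fun n => f n ω) atTop (𝓝 (g ω)) := by
  have hbdd' : ∀ n, eLpNorm ((-f) n) 1 μ ≤ R := fun n => by simpa using hbdd n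
  refine ⟨-(ℱ.limitProcess (-f) μ),
    ((hf.neg.memLp_limitProcess hbdd').integrable le_rfl).neg, ?_⟩
  filter_upwards [hf.neg.ae_tendsto_limitProcess hbdd'] with ω hω
  simpa using hω.neg

end Supermartingale

end MeasureTheory

theorem stoppedAt_eq_stoppedProcess {Ω : Type*} (Y : ℕ → Ω → ℝ) (T : Ω → ℕ∞) :
    stoppedAt Y T = stoppedProcess Y T := by
  ext n ω
  simp only [stoppedAt, stoppedProcess, min_comm (T ω)]
  congr 1
  induction T ω using ENat.recTopCoe with
  | top => simp only [min_top_right]; rfl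
  | coe k => exact (congrArg _ (WithTop.coe_min n k).symm).trans rfl

theorem stoppedAt_zero {Ω : Type*} (Y : ℕ → Ω → ℝ) (T : Ω → ℕ∞) : stoppedAt Y T 0 = Y 0 := by
  ext ω
  simp [stoppedAt]

/-- Optional stopping for supermartingales with uniformly integrable negative parts: if
`{Y n}` is a supermartingale, `T` a stopping time, and the family `{Y_{min(T,n)}⁻}` is
uniformly integrable, then `Y_T = lim_n Y_{min(T,n)}` exists a.s., is integrable, and
`E[Y_T] ≤ E[Y_0]`. -/
theorem optional_stopping_of_ui_neg_parts {Ω : Type*} {m : MeasurableSpace Ω}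
    {μ : Measure Ω} [IsProbabilityMeasure μ] (f : Filtration ℕ m) (Y : ℕ → Ω → ℝ)
    (T : Ω → ℕ∞) (hY : Supermartingale Y f μ) (hT : IsStoppingTimeENat f T)
    (hUIneg : UniformIntegrable (fun n ω => max 0 (-(stoppedAt Y T n ω))) 1 μ) :
    ∃ YT : Ω → ℝ, Integrable YT μ ∧
      (∀ᵐ ω ∂μ, Tendsto (fun n => stoppedAt Y T n ω) atTop (𝓝 (YT ω))) ∧
      ∫ ω, YT ω ∂μ ≤ ∫ ω, Y 0 ω ∂μ := by
  -- `IsStoppingTimeENat f T` unfolds to Mathlib's `IsStoppingTime f T`, as `ℕ∞ = WithTop ℕ`.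
  have hZ : Supermartingale (stoppedAt Y T) f μ :=
    stoppedAt_eq_stoppedProcess Y T ▸ hY.stoppedProcess hT
  have hUI : UniformIntegrable (fun n => (stoppedAt Y T n)⁻) 1 μ := by
    convert hUIneg using 3 with n ω
    exact max_comm _ _
  obtain ⟨C, hC⟩ := hUI.2.2
  obtain ⟨YT, hYT, hlim⟩ :=
    hZ.exists_integrable_ae_tendsto_of_bdd (hZ.eLpNorm_one_le_of_eLpNorm_negPart_le hC)
  refine ⟨YT, hYT, hlim, integral_le_of_tendsto_ae_of_unifIntegrable_negPart
    hZ.integrable hYT hUI.2.1 hlim fun n => ?_⟩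
  simpa only [stoppedAt_zero] using hZ.integral_le (Nat.zero_le n)
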